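/- arXiv:2505.06404 — 2 statements merged into one kernel-verified Lean document; each statement's English description precedes it below -/
import Mathlib

section
/- Let |0⟩ = (1,0)ᵀ and |+⟩ = (1/√2)(1,1)ᵀ. Define P(γ,β) = |⟨0| RX(2β) RZ(2γ) |+⟩|² · |⟨0| RX(2β) RZ(4γ) |+⟩|². Then for all real γ and β, P(γ,β) < 1. -/
open Matrix Complex

noncomputable def RZ (θ : ℝ) : Matrix (Fin 2) (Fin 2) ℂ :=
  !![Complex.exp (-Complex.I * θ / 2), 0; 0, Complex.exp (Complex.I * θ / 2)]

noncomputable def RX (θ : ℝ) : Matrix (Fin 2) (Fin 2) ℂ :=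
  !![(Real.cos (θ/2) : ℂ), -Complex.I * Real.sin (θ/2);
     -Complex.I * Real.sin (θ/2), (Real.cos (θ/2) : ℂ)]

noncomputable def ketPlus : Fin 2 → ℂ := ![(1 / Real.sqrt 2 : ℝ), (1 / Real.sqrt 2 : ℝ)]

def ket0 : Fin 2 → ℂ := ![1, 0]

noncomputable def P (γ β : ℝ) : ℝ :=
  (‖dotProduct (star ket0) ((RX (2 * β) * RZ (2 * γ)) *ᵥ ketPlus)‖) ^ 2 *
  (‖dotProduct (star ket0) ((RX (2 * β) * RZ (4 * γ)) *ᵥ ketPlus)‖) ^ 2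

lemma qaoa_amp_sq (g β : ℝ) :
    (‖dotProduct (star ket0) ((RX (2 * β) * RZ (2 * g)) *ᵥ ketPlus)‖) ^ 2
    = (1 + Real.sin (2*β) * Real.sin (2*g)) / 2 := by
  rw [Complex.sq_norm]
  simp [RX, RZ, ketPlus, ket0, dotProduct, mulVec, Matrix.mul_apply, Fin.sum_univ_two,
    Complex.normSq_apply, Complex.exp_re, Complex.exp_im, Complex.cos_ofReal_re,
    Complex.sin_ofReal_re, neg_div, Real.cos_neg, Real.sin_neg, Real.sin_two_mul,
    mul_div_cancel_left₀]
  have h2 : Real.sqrt 2 * Real.sqrt 2 = 2 := Real.mul_self_sqrt (by norm_num)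
  have hb := Real.sin_sq_add_cos_sq β
  have hg := Real.sin_sq_add_cos_sq g
  linear_combination (Real.sin β*Real.cos β*Real.sin g*Real.cos g + 1/4) * h2 +
    (Real.sqrt 2*Real.sqrt 2/4)*(Real.sin g^2+Real.cos g^2) * hb + (Real.sqrt 2*Real.sqrt 2/4) * hg

lemma qaoa_key (s a c : ℝ) (hs : s^2 ≤ 1) (h : a^2 + c^2 = 1) :
    (1 + s*a)/2 * ((1 + s*(2*a*c))/2) < 1 := by
  have hx2 : (s*a)^2 ≤ 1 := by nlinarith [mul_nonneg (sub_nonneg.2 hs) (sq_nonneg a), sq_nonneg c]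
  have hy2 : (s*(2*a*c))^2 ≤ 1 := by
    nlinarith [sq_nonneg (a^2 - c^2), mul_nonneg (sub_nonneg.2 hs) (sq_nonneg (2*a*c))]
  rcases lt_or_ge (s*a) 1 with hx | hx
  · nlinarith [sq_nonneg (s*a + 1), sq_nonneg (s*(2*a*c) + 1)]
  · have hc : c = 0 := by nlinarith [mul_nonneg (sub_nonneg.2 hs) (sq_nonneg a), sq_nonneg c]
    rw [hc]
    nlinarith [sq_nonneg (s*a + 1)]

theorem qaoa_p1_coeffs_one_two (γ β : ℝ) : P γ β < 1 := by
  have h4 : (4 : ℝ) * γ = 2 * (2 * γ) := by ring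
  rw [P, h4, qaoa_amp_sq, qaoa_amp_sq, Real.sin_two_mul (2 * γ)]
  exact qaoa_key _ _ _ (Real.sin_sq_le_one _) (Real.sin_sq_add_cos_sq _)
end

section
/- Let |0⟩ = (1,0)ᵀ, |+⟩ = (1/√2)(1,1)ᵀ, and for a ∈ {1,2,3} define v_a(γ₁,γ₂,β₁,β₂) = RX(2β₂) RZ(2aγ₂) RX(2β₁) RZ(2aγ₁) |+⟩. Then for all real γ₁, γ₂, β₁, β₂, the product ∏_{a=1}^{3} |⟨0| v_a ⟩|² < 1. -/
open Matrix Complex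

noncomputable def v (a γ₁ γ₂ β₁ β₂ : ℝ) : Fin 2 → ℂ :=
  (RX (2 * β₂) * RZ (2 * a * γ₂) * RX (2 * β₁) * RZ (2 * a * γ₁)) *ᵥ ketPlus

/-- the real quantity `F` with `P = (1+F)/2` -/
noncomputable def Gq (cb1 sb1 cb2 sb2 ct st cf sf : ℝ) : ℝ :=
  (2*sb2*cb2*(2*sf*cf))*(ct^2 - st^2) +
  (2*sb2*cb2*(cb1^2-sb1^2)*(cf^2-sf^2) + (cb2^2-sb2^2)*(2*sb1*cb1))*(2*st*ct)

lemma exp_negI (θ : ℝ) : Complex.exp (-Complex.I * θ / 2)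
    = (Real.cos (θ/2) : ℂ) - Real.sin (θ/2) * Complex.I := by
  rw [show -Complex.I * (θ:ℂ) / 2 = ((-(θ/2) : ℝ) : ℂ) * Complex.I by push_cast; ring,
    Complex.exp_mul_I, ← Complex.ofReal_cos, ← Complex.ofReal_sin,
    Real.cos_neg, Real.sin_neg, Complex.ofReal_neg]
  ring

lemma exp_posI (θ : ℝ) : Complex.exp (Complex.I * θ / 2)
    = (Real.cos (θ/2) : ℂ) + Real.sin (θ/2) * Complex.I := by
  rw [show Complex.I * (θ:ℂ) / 2 = (((θ/2) : ℝ) : ℂ) * Complex.I by push_cast; ring,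
    Complex.exp_mul_I, ← Complex.ofReal_cos, ← Complex.ofReal_sin]

lemma RZ_eq (θ : ℝ) : RZ θ = !![(Real.cos (θ/2) : ℂ) - Real.sin (θ/2) * Complex.I, 0;
    0, (Real.cos (θ/2) : ℂ) + Real.sin (θ/2) * Complex.I] := by
  unfold RZ
  rw [exp_negI, exp_posI]

lemma dot_ket0 (w : Fin 2 → ℂ) : dotProduct (star ket0) w = w 0 := by
  simp [ket0, dotProduct, Fin.sum_univ_two]

lemma amp (a γ₁ γ₂ β₁ β₂ : ℝ) :
    (‖dotProduct (star ket0) (v a γ₁ γ₂ β₁ β₂)‖)^2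
      = (1 + Gq (Real.cos β₁) (Real.sin β₁) (Real.cos β₂) (Real.sin β₂)
          (Real.cos (a*γ₁)) (Real.sin (a*γ₁)) (Real.cos (a*γ₂)) (Real.sin (a*γ₂)))/2 := by
  set cb1 := Real.cos β₁ with hcb1
  set sb1 := Real.sin β₁ with hsb1
  set cb2 := Real.cos β₂ with hcb2
  set sb2 := Real.sin β₂ with hsb2
  set ct := Real.cos (a*γ₁) with hct
  set st := Real.sin (a*γ₁) with hst
  set cf := Real.cos (a*γ₂) with hcf
  set sf := Real.sin (a*γ₂) with hsf
  have hz : dotProduct (star ket0) (v a γ₁ γ₂ β₁ β₂)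
      = ((Real.sqrt 2)⁻¹ : ℝ) * (((-sb1*sb2*st*sf - sb1*sb2*ct*cf + sb1*cb2*st*cf - sb1*cb2*ct*sf + cb1*sb2*st*cf + cb1*sb2*ct*sf - cb1*cb2*st*sf + cb1*cb2*ct*cf : ℝ) : ℂ)
        + ((sb1*sb2*st*cf - sb1*sb2*ct*sf - sb1*cb2*st*sf - sb1*cb2*ct*cf + cb1*sb2*st*sf - cb1*sb2*ct*cf - cb1*cb2*st*cf - cb1*cb2*ct*sf : ℝ) : ℂ) * Complex.I) := by
    have e1 : (2 * a * γ₁) / 2 = a * γ₁ := by ring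
    have e2 : (2 * a * γ₂) / 2 = a * γ₂ := by ring
    have e3 : (2 * β₁) / 2 = β₁ := by ring
    have e4 : (2 * β₂) / 2 = β₂ := by ring
    rw [v, dot_ket0, RZ_eq, RZ_eq, e1, e2]
    unfold RX
    rw [e3, e4]
    simp only [Matrix.mulVec, Matrix.mul_apply, dotProduct, Fin.sum_univ_two,
      Matrix.cons_val', Matrix.cons_val_zero, Matrix.cons_val_one, Matrix.head_cons,
      Matrix.empty_val', Matrix.cons_val_fin_one, Matrix.of_apply, Matrix.head_fin_const,
      ketPlus]
    rw [← hcb1, ← hsb1, ← hcb2, ← hsb2, ← hct, ← hst, ← hcf, ← hsf]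
    apply Complex.ext <;>
      simp only [Complex.add_re, Complex.add_im, Complex.sub_re, Complex.sub_im,
        Complex.mul_re, Complex.mul_im, Complex.neg_re, Complex.neg_im, Complex.I_re,
        Complex.I_im, Complex.ofReal_re, Complex.ofReal_im, Complex.zero_re, Complex.zero_im,
        Complex.one_re, Complex.one_im, mul_zero, zero_mul, mul_one, one_mul, sub_zero,
        zero_sub, add_zero, zero_add, neg_zero, neg_neg] <;>
      ring
  rw [hz, norm_mul, mul_pow, Complex.norm_real, Real.norm_eq_abs, Complex.sq_norm, Complex.normSq_add_mul_I,
    _root_.abs_of_nonneg (by positivity : (0:ℝ) ≤ (Real.sqrt 2)⁻¹)]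
  have hs2 : ((Real.sqrt 2)⁻¹ : ℝ)^2 = 1/2 := by
    rw [inv_pow, Real.sq_sqrt (by norm_num : (0:ℝ) ≤ 2)]
    norm_num
  rw [hs2]
  have h1 : sb1^2 + cb1^2 = 1 := Real.sin_sq_add_cos_sq β₁
  have h2 : sb2^2 + cb2^2 = 1 := Real.sin_sq_add_cos_sq β₂
  have ht : st^2 + ct^2 = 1 := Real.sin_sq_add_cos_sq (a*γ₁)
  have hf : sf^2 + cf^2 = 1 := Real.sin_sq_add_cos_sq (a*γ₂)
  have key : (-sb1*sb2*st*sf - sb1*sb2*ct*cf + sb1*cb2*st*cf - sb1*cb2*ct*sf + cb1*sb2*st*cf + cb1*sb2*ct*sf - cb1*cb2*st*sf + cb1*cb2*ct*cf)^2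
      + (sb1*sb2*st*cf - sb1*sb2*ct*sf - sb1*cb2*st*sf - sb1*cb2*ct*cf + cb1*sb2*st*sf - cb1*sb2*ct*cf - cb1*cb2*st*cf - cb1*cb2*ct*sf)^2
      = 1 + Gq cb1 sb1 cb2 sb2 ct st cf sf := by
    unfold Gq
    linear_combination (sb2^2*st^2*sf^2 + sb2^2*st^2*cf^2 + sb2^2*ct^2*sf^2 + sb2^2*ct^2*cf^2 - 4*cb2*sb2*st^2*cf*sf + 4*cb2*sb2*ct^2*cf*sf + cb2^2*st^2*sf^2 + cb2^2*st^2*cf^2 + cb2^2*ct^2*sf^2 + cb2^2*ct^2*cf^2) * h1 + (st^2*sf^2 + st^2*cf^2 + ct^2*sf^2 + ct^2*cf^2 - 4*cb1*sb1*ct*st + 4*cb1*sb1*ct*st*sf^2 + 4*cb1*sb1*ct*st*cf^2) * h2 + (sf^2 + cf^2) * ht + (1 + 4*cb1*sb1*ct*st - 8*cb1*sb1*sb2^2*ct*st) * hf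
  rw [key]; ring

lemma Gq_key {cb1 sb1 cb2 sb2 ct st cf sf : ℝ} (h1 : sb1^2+cb1^2=1) (h2 : sb2^2+cb2^2=1)
    (ht : st^2+ct^2=1) (hf : sf^2+cf^2=1) :
    2*(1 - Gq cb1 sb1 cb2 sb2 ct st cf sf)
      = ((2*sb2*cb2)*(2*sf*cf) - (ct^2-st^2))^2
      + ((2*sb2*cb2*(cb1^2-sb1^2)*(cf^2-sf^2) + (cb2^2-sb2^2)*(2*sb1*cb1)) - 2*st*ct)^2
      + ((2*sb2*cb2)*(2*sb1*cb1)*(cf^2-sf^2) - (cb2^2-sb2^2)*(cb1^2-sb1^2))^2 := by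
  unfold Gq
  linear_combination (-sb2^4 + 2*cb2^2*sb2^2 - 4*cb2^2*sb2^2*sf^4 + 8*cb2^2*sb2^2*cf^2*sf^2 - 4*cb2^2*sb2^2*cf^4 - cb2^4 - sb1^2*sb2^4 + 2*sb1^2*cb2^2*sb2^2 - 4*sb1^2*cb2^2*sb2^2*sf^4 + 8*sb1^2*cb2^2*sb2^2*cf^2*sf^2 - 4*sb1^2*cb2^2*sb2^2*cf^4 - sb1^2*cb2^4 - cb1^2*sb2^4 + 2*cb1^2*cb2^2*sb2^2 - 4*cb1^2*cb2^2*sb2^2*sf^4 + 8*cb1^2*cb2^2*sb2^2*cf^2*sf^2 - 4*cb1^2*cb2^2*sb2^2*cf^4 - cb1^2*cb2^4) * h1 + (-1 + 3*sb2^2 - 4*sb2^2*sf^4 - 8*sb2^2*cf^2*sf^2 - 4*sb2^2*cf^4 - cb2^2) * h2 + (-1 - st^2 - ct^2) * ht + (-4*sb2^2 - 4*sb2^2*sf^2 - 4*sb2^2*cf^2 + 4*sb2^4 + 4*sb2^4*sf^2 + 4*sb2^4*cf^2) * hf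

lemma Gq_le_one {cb1 sb1 cb2 sb2 ct st cf sf : ℝ} (h1 : sb1^2+cb1^2=1) (h2 : sb2^2+cb2^2=1)
    (ht : st^2+ct^2=1) (hf : sf^2+cf^2=1) :
    Gq cb1 sb1 cb2 sb2 ct st cf sf ≤ 1 := by
  have k := Gq_key h1 h2 ht hf
  nlinarith [sq_nonneg ((2*sb2*cb2)*(2*sf*cf) - (ct^2-st^2)),
    sq_nonneg ((2*sb2*cb2*(cb1^2-sb1^2)*(cf^2-sf^2) + (cb2^2-sb2^2)*(2*sb1*cb1)) - 2*st*ct),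
    sq_nonneg ((2*sb2*cb2)*(2*sb1*cb1)*(cf^2-sf^2) - (cb2^2-sb2^2)*(cb1^2-sb1^2))]

lemma Gq_eq_one {cb1 sb1 cb2 sb2 ct st cf sf : ℝ} (h1 : sb1^2+cb1^2=1) (h2 : sb2^2+cb2^2=1)
    (ht : st^2+ct^2=1) (hf : sf^2+cf^2=1)
    (hG : Gq cb1 sb1 cb2 sb2 ct st cf sf = 1) :
    (2*sb2*cb2)*(2*sf*cf) = ct^2-st^2
    ∧ 2*sb2*cb2*(cb1^2-sb1^2)*(cf^2-sf^2) + (cb2^2-sb2^2)*(2*sb1*cb1) = 2*st*ct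
    ∧ (2*sb2*cb2)*(2*sb1*cb1)*(cf^2-sf^2) = (cb2^2-sb2^2)*(cb1^2-sb1^2) := by
  have k := Gq_key h1 h2 ht hf
  rw [hG] at k
  norm_num at k
  have q1 := sq_nonneg ((2*sb2*cb2)*(2*sf*cf) - (ct^2-st^2))
  have q2 := sq_nonneg ((2*sb2*cb2*(cb1^2-sb1^2)*(cf^2-sf^2) + (cb2^2-sb2^2)*(2*sb1*cb1)) - 2*st*ct)
  have q3 := sq_nonneg ((2*sb2*cb2)*(2*sb1*cb1)*(cf^2-sf^2) - (cb2^2-sb2^2)*(cb1^2-sb1^2))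
  have z1 : (2*sb2*cb2)*(2*sf*cf) - (ct^2-st^2) = 0 := by
    have h0 : ((2*sb2*cb2)*(2*sf*cf) - (ct^2-st^2))^2 = 0 := by linarith [k, q1, q2, q3]
    exact pow_eq_zero_iff two_ne_zero |>.mp h0
  have z2 : (2*sb2*cb2*(cb1^2-sb1^2)*(cf^2-sf^2) + (cb2^2-sb2^2)*(2*sb1*cb1)) - 2*st*ct = 0 := by
    have h0 : ((2*sb2*cb2*(cb1^2-sb1^2)*(cf^2-sf^2) + (cb2^2-sb2^2)*(2*sb1*cb1)) - 2*st*ct)^2 = 0 := by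
      linarith [k, q1, q2, q3]
    exact pow_eq_zero_iff two_ne_zero |>.mp h0
  have z3 : (2*sb2*cb2)*(2*sb1*cb1)*(cf^2-sf^2) - (cb2^2-sb2^2)*(cb1^2-sb1^2) = 0 := by
    have h0 : ((2*sb2*cb2)*(2*sb1*cb1)*(cf^2-sf^2) - (cb2^2-sb2^2)*(cb1^2-sb1^2))^2 = 0 := by
      linarith [k, q1, q2, q3]
    exact pow_eq_zero_iff two_ne_zero |>.mp h0
  exact ⟨sub_eq_zero.mp z1, sub_eq_zero.mp z2, sub_eq_zero.mp z3⟩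

lemma noAllOne (p q r t kx1 sx1 kx2 sx2 ky1 sy1 ky2 sy2 ky3 : ℝ)
    (hpq : p^2+q^2 = 1) (hrt : r^2+t^2 = 1) (hy1 : ky1^2+sy1^2 = 1)
    (hkx2 : kx2 = 2*kx1^2 - 1) (hsx2 : sx2 = 2*sx1*kx1)
    (hky2 : ky2 = 2*ky1^2 - 1) (hsy2 : sy2 = 2*sy1*ky1)
    (hky3 : ky3 = 4*ky1^3 - 3*ky1)
    (e11 : t*sy1 = kx1) (e21 : t*p*ky1 + r*q = sx1) (e31 : t*q*ky1 = r*p)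
    (e12 : t*sy2 = kx2) (e22 : t*p*ky2 + r*q = sx2) (e32 : t*q*ky2 = r*p)
    (e33 : t*q*ky3 = r*p) : False := by
  by_cases htq : t*q = 0
  · rcases mul_eq_zero.mp htq with h0 | h0
    · rw [h0] at e11 e12
      rw [zero_mul] at e11 e12
      rw [hkx2] at e12
      nlinarith [e11, e12]
    · rw [h0] at hpq e21 e22 e31
      have hp2 : p^2 = 1 := by linarith [sq_nonneg q, hpq]; 
      have hrp : r*p = 0 := by linarith [e31]
      have hr : r = 0 := by linear_combination p*hrp - r*hp2
      have ht2 : t^2 = 1 := by rw [hr] at hrt; nlinarith [hrt]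
      rw [hr] at e21 e22
      have e21' : t*p*ky1 = sx1 := by linarith [e21]
      have e22' : t*p*ky2 = sx2 := by linarith [e22]
      have step1 : 2*(t*sy1*ky1) = 2*sy1^2 - 1 := by
        linear_combination e12 - t*hsy2 + hkx2 - 2*(t*sy1+kx1)*e11 + 2*sy1^2*ht2
      have step2 : 2*(t*sy1*ky1) = 2*ky1^2 - 1 := by
        linear_combination (-(t*p))*e22' - t*p*hsx2 + 2*t*p*kx1*e21' + 2*t^2*p^2*ky1*e11
          + (ky2 - 2*t*ky1*sy1)*(p^2*ht2 + hp2) + hky2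
      have h5 : sy1^2 = ky1^2 := by linarith
      have h6 : sy1^2 = 1/2 := by linarith
      have h7 : ky1^2 = 1/2 := by linarith
      have h8 : t*sy1*ky1 = 0 := by linarith
      have h9 : t^2*(sy1^2*ky1^2) = 0 := by linear_combination (t*sy1*ky1)*h8
      rw [ht2, h6, h7] at h9
      norm_num at h9
  · have hky12 : ky1 = ky2 := mul_left_cancel₀ htq (by linear_combination e31 - e32)
    have hky13 : ky1 = ky3 := mul_left_cancel₀ htq (by linear_combination e31 - e33)
    have f1 : (ky1 - 1)*(2*ky1 + 1) = 0 := by linear_combination -hky12 - hky2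
    have f2 : 4*ky1*(ky1-1)*(ky1+1) = 0 := by linear_combination -hky13 - hky3
    have hky1 : ky1 = 1 := by
      rcases mul_eq_zero.mp f1 with h | h
      · linarith [sub_eq_zero.mp h]
      · have : ky1 = -1/2 := by linarith
        rw [this] at f2; norm_num at f2
    have hsy1 : sy1 = 0 := by
      have : sy1^2 = 0 := by rw [hky1] at hy1; linarith
      exact pow_eq_zero_iff two_ne_zero |>.mp this
    have hkx1 : kx1 = 0 := by rw [← e11, hsy1, mul_zero]
    have hsy2' : sy2 = 0 := by rw [hsy2, hsy1]; ring
    have hkx2' : kx2 = 0 := by rw [← e12, hsy2', mul_zero]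
    rw [hkx2, hkx1] at hkx2'
    norm_num at hkx2'

lemma prod3_lt {x y z : ℝ} (hx0 : 0 ≤ x) (hx1 : x ≤ 1) (hy0 : 0 ≤ y) (hy1 : y ≤ 1)
    (hz0 : 0 ≤ z) (hz1 : z ≤ 1) (h : x < 1 ∨ y < 1 ∨ z < 1) : x*(y*z) < 1 := by
  rcases h with h | h | h <;> nlinarith [mul_nonneg hx0 hy0, mul_nonneg hy0 hz0]

theorem qaoa_p2_coeffs_one_two_three (γ₁ γ₂ β₁ β₂ : ℝ) :
    (∏ a ∈ Finset.Icc (1 : ℕ) 3,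
      (‖dotProduct (star ket0) (v a γ₁ γ₂ β₁ β₂)‖) ^ 2) < 1 := by
  have hprod : (∏ a ∈ Finset.Icc (1:ℕ) 3,
        (‖dotProduct (star ket0) (v a γ₁ γ₂ β₁ β₂)‖)^2)
      = (‖dotProduct (star ket0) (v 1 γ₁ γ₂ β₁ β₂)‖)^2
        * ((‖dotProduct (star ket0) (v 2 γ₁ γ₂ β₁ β₂)‖)^2
        * (‖dotProduct (star ket0) (v 3 γ₁ γ₂ β₁ β₂)‖)^2) := by
    rw [show Finset.Icc (1:ℕ) 3 = {1,2,3} from rfl]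
    rw [Finset.prod_insert (by decide), Finset.prod_insert (by decide), Finset.prod_singleton]
    push_cast
    ring_nf
  rw [hprod]
  have A1 := amp 1 γ₁ γ₂ β₁ β₂
  have A2 := amp 2 γ₁ γ₂ β₁ β₂
  have A3 := amp 3 γ₁ γ₂ β₁ β₂
  rw [show (1:ℝ)*γ₁ = γ₁ from one_mul γ₁, show (1:ℝ)*γ₂ = γ₂ from one_mul γ₂] at A1
  simp only [Real.cos_two_mul, Real.sin_two_mul] at A2
  simp only [Real.cos_three_mul, Real.sin_three_mul] at A3
  have h1 : Real.sin β₁^2 + Real.cos β₁^2 = 1 := Real.sin_sq_add_cos_sq β₁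
  have h2 : Real.sin β₂^2 + Real.cos β₂^2 = 1 := Real.sin_sq_add_cos_sq β₂
  have hx : Real.sin γ₁^2 + Real.cos γ₁^2 = 1 := Real.sin_sq_add_cos_sq γ₁
  have hy : Real.sin γ₂^2 + Real.cos γ₂^2 = 1 := Real.sin_sq_add_cos_sq γ₂
  have px2 : (2*Real.sin γ₁*Real.cos γ₁)^2 + (2*Real.cos γ₁^2-1)^2 = 1 := by
    linear_combination (4*Real.cos γ₁^2)*hx
  have py2 : (2*Real.sin γ₂*Real.cos γ₂)^2 + (2*Real.cos γ₂^2-1)^2 = 1 := by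
    linear_combination (4*Real.cos γ₂^2)*hy
  have px3 : (3*Real.sin γ₁-4*Real.sin γ₁^3)^2 + (4*Real.cos γ₁^3-3*Real.cos γ₁)^2 = 1 := by
    linear_combination (1 - 8*Real.sin γ₁^2 + 16*Real.sin γ₁^4 - 8*Real.cos γ₁^2
      - 16*Real.cos γ₁^2*Real.sin γ₁^2 + 16*Real.cos γ₁^4)*hx
  have py3 : (3*Real.sin γ₂-4*Real.sin γ₂^3)^2 + (4*Real.cos γ₂^3-3*Real.cos γ₂)^2 = 1 := by
    linear_combination (1 - 8*Real.sin γ₂^2 + 16*Real.sin γ₂^4 - 8*Real.cos γ₂^2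
      - 16*Real.cos γ₂^2*Real.sin γ₂^2 + 16*Real.cos γ₂^4)*hy
  have L1 := Gq_le_one h1 h2 hx hy
  have L2 := Gq_le_one h1 h2 px2 py2
  have L3 := Gq_le_one h1 h2 px3 py3
  have key : ¬(Gq (Real.cos β₁) (Real.sin β₁) (Real.cos β₂) (Real.sin β₂)
        (Real.cos γ₁) (Real.sin γ₁) (Real.cos γ₂) (Real.sin γ₂) = 1
      ∧ Gq (Real.cos β₁) (Real.sin β₁) (Real.cos β₂) (Real.sin β₂)
        (2*Real.cos γ₁^2-1) (2*Real.sin γ₁*Real.cos γ₁) (2*Real.cos γ₂^2-1) (2*Real.sin γ₂*Real.cos γ₂) = 1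
      ∧ Gq (Real.cos β₁) (Real.sin β₁) (Real.cos β₂) (Real.sin β₂)
        (4*Real.cos γ₁^3-3*Real.cos γ₁) (3*Real.sin γ₁-4*Real.sin γ₁^3)
        (4*Real.cos γ₂^3-3*Real.cos γ₂) (3*Real.sin γ₂-4*Real.sin γ₂^3) = 1) := by
    rintro ⟨g1, g2, g3⟩
    obtain ⟨E11, E21, E31⟩ := Gq_eq_one h1 h2 hx hy g1
    obtain ⟨E12, E22, E32⟩ := Gq_eq_one h1 h2 px2 py2 g2
    obtain ⟨E13, E23, E33⟩ := Gq_eq_one h1 h2 px3 py3 g3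
    exact noAllOne (Real.cos β₁^2 - Real.sin β₁^2) (2*Real.sin β₁*Real.cos β₁)
      (Real.cos β₂^2 - Real.sin β₂^2) (2*Real.sin β₂*Real.cos β₂)
      (Real.cos γ₁^2 - Real.sin γ₁^2) (2*Real.sin γ₁*Real.cos γ₁)
      ((2*Real.cos γ₁^2-1)^2 - (2*Real.sin γ₁*Real.cos γ₁)^2)
      (2*(2*Real.sin γ₁*Real.cos γ₁)*(2*Real.cos γ₁^2-1))
      (Real.cos γ₂^2 - Real.sin γ₂^2) (2*Real.sin γ₂*Real.cos γ₂)
      ((2*Real.cos γ₂^2-1)^2 - (2*Real.sin γ₂*Real.cos γ₂)^2)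
      (2*(2*Real.sin γ₂*Real.cos γ₂)*(2*Real.cos γ₂^2-1))
      ((4*Real.cos γ₂^3-3*Real.cos γ₂)^2 - (3*Real.sin γ₂-4*Real.sin γ₂^3)^2)
      (by linear_combination (Real.sin β₁^2+Real.cos β₁^2+1)*h1)
      (by linear_combination (Real.sin β₂^2+Real.cos β₂^2+1)*h2)
      (by linear_combination (Real.sin γ₂^2+Real.cos γ₂^2+1)*hy)
      (by linear_combination (2*(Real.cos γ₁^2-Real.sin γ₁^2)-2)*hx)
      (by linear_combination (4*Real.sin γ₁*Real.cos γ₁)*hx)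
      (by linear_combination (2*(Real.cos γ₂^2-Real.sin γ₂^2)-2)*hy)
      (by linear_combination (4*Real.sin γ₂*Real.cos γ₂)*hy)
      (by linear_combination (12*Real.sin γ₂^2-12*Real.sin γ₂^4-12*Real.cos γ₂^2+12*Real.cos γ₂^4)*hy)
      (by linear_combination E11) (by linear_combination E21) (by linear_combination E31)
      (by linear_combination E12) (by linear_combination E22) (by linear_combination E32)
      (by linear_combination E33)
  have n1 : (0:ℝ) ≤ (‖dotProduct (star ket0) (v 1 γ₁ γ₂ β₁ β₂)‖)^2 := sq_nonneg _
  have n2 : (0:ℝ) ≤ (‖dotProduct (star ket0) (v 2 γ₁ γ₂ β₁ β₂)‖)^2 := sq_nonneg _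
  have n3 : (0:ℝ) ≤ (‖dotProduct (star ket0) (v 3 γ₁ γ₂ β₁ β₂)‖)^2 := sq_nonneg _
  have u1 : (‖dotProduct (star ket0) (v 1 γ₁ γ₂ β₁ β₂)‖)^2 ≤ 1 := by
    rw [A1]; linarith [L1]
  have u2 : (‖dotProduct (star ket0) (v 2 γ₁ γ₂ β₁ β₂)‖)^2 ≤ 1 := by
    rw [A2]; linarith [L2]
  have u3 : (‖dotProduct (star ket0) (v 3 γ₁ γ₂ β₁ β₂)‖)^2 ≤ 1 := by
    rw [A3]; linarith [L3]
  have hlt : (‖dotProduct (star ket0) (v 1 γ₁ γ₂ β₁ β₂)‖)^2 < 1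
      ∨ (‖dotProduct (star ket0) (v 2 γ₁ γ₂ β₁ β₂)‖)^2 < 1
      ∨ (‖dotProduct (star ket0) (v 3 γ₁ γ₂ β₁ β₂)‖)^2 < 1 := by
    by_contra hc
    push_neg at hc
    obtain ⟨m1, m2, m3⟩ := hc
    apply key
    refine ⟨?_, ?_, ?_⟩
    · rw [A1] at m1; linarith [L1]
    · rw [A2] at m2; linarith [L2]
    · rw [A3] at m3; linarith [L3]
  exact prod3_lt n1 u1 n2 u2 n3 u3 hlt
end
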